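/- Let (Φ_t)_{t≥0} be a family of measure-preserving bijections of 𝕋^d. If there exists a single bounded measurable ρ₀ : 𝕋^d → ℝ whose trajectory {ρ₀∘Φ_t^{-1}}_{t≥0} is not precompact in L²(𝕋^d), then the set ℱ of all ρ ∈ L^∞(𝕋^d) whose trajectory {ρ∘Φ_t^{-1}}_{t≥0} is not precompact in L²(𝕋^d) is open and dense in the Banach space L^∞(𝕋^d). -/

import Mathlib

open MeasureTheory Filter Topology
open scoped ENNReal

/-- The `d`-dimensional torus `ℝ^d/ℤ^d`, with its quotient metric and
Haar–Lebesgue probability measure. -/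
abbrev Torus (d : ℕ) := Fin d → AddCircle (1 : ℝ)

/-- The trajectory `{ρ ∘ Φ_t⁻¹ : t ≥ 0}` of a function `ρ`, regarded as the set of
elements of `L²(𝕋^d)` whose representative agrees a.e. with `ρ ∘ (Φ t).symm`
for some `t ≥ 0`. -/
def trajectory {d : ℕ} (Φ : ℝ → (Torus d ≃ᵐ Torus d)) (ρ : Torus d → ℝ) :
    Set (Lp ℝ 2 (volume : Measure (Torus d))) :=
  {g | ∃ t : ℝ, 0 ≤ t ∧ (g : Torus d → ℝ) =ᵐ[volume] ρ ∘ (Φ t).symm}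

/-- The set `ℱ` of mixed data: elements of the Banach space `L^∞(𝕋^d)` whose
trajectory `{ρ ∘ Φ_t⁻¹}_{t ≥ 0}` is not precompact in `L²(𝕋^d)`. -/
def mixedData {d : ℕ} (Φ : ℝ → (Torus d ≃ᵐ Torus d)) :
    Set (Lp ℝ ⊤ (volume : Measure (Torus d))) :=
  {ρ | ¬ IsCompact (closure (trajectory Φ (ρ : Torus d → ℝ)))}

instance : IsProbabilityMeasure (volume : Measure (AddCircle (1 : ℝ))) :=
  ⟨by rw [AddCircle.measure_univ]; simp⟩

instance (d : ℕ) : IsProbabilityMeasure (volume : Measure (Torus d)) :=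
  inferInstanceAs (IsProbabilityMeasure (Measure.pi fun _ => volume))

/-- A set all of whose points are within `ε` of some totally bounded set, for every `ε`,
is totally bounded. -/
lemma totallyBounded_of_near {X : Type*} [PseudoMetricSpace X] {s : Set X}
    (h : ∀ ε : ℝ, 0 < ε → ∃ t : Set X, TotallyBounded t ∧ ∀ x ∈ s, ∃ y ∈ t, dist x y ≤ ε) :
    TotallyBounded s := by
  rw [Metric.totallyBounded_iff]
  intro ε hε
  obtain ⟨t, htb, hnear⟩ := h (ε / 3) (by positivity)
  obtain ⟨u, hu, hcov⟩ := Metric.totallyBounded_iff.mp htb (ε / 3) (by positivity)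
  refine ⟨u, hu, fun x hx => ?_⟩
  obtain ⟨y, hyt, hxy⟩ := hnear x hx
  obtain ⟨z, hzu, hyz⟩ := Set.mem_iUnion₂.mp (hcov hyt)
  rw [Metric.mem_ball] at hyz
  exact Set.mem_iUnion₂.mpr ⟨z, hzu, Metric.mem_ball.mpr
    (lt_of_le_of_lt (dist_triangle x y z) (by linarith))⟩

/-- The set of scaled differences of two totally bounded sets in a normed space
is totally bounded. -/
lemma tb_comb {X : Type*} [NormedAddCommGroup X] [NormedSpace ℝ X] (c : ℝ) {A B : Set X}
    (hA : TotallyBounded A) (hB : TotallyBounded B) :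
    TotallyBounded {x : X | ∃ a ∈ A, ∃ b ∈ B, x = c • (a - b)} := by
  rw [Metric.totallyBounded_iff]
  intro ε hε
  set δ : ℝ := ε / (2 * (|c| + 1)) with hδdef
  have hδ : 0 < δ := by positivity
  obtain ⟨u, hu, hcu⟩ := Metric.totallyBounded_iff.mp hA δ hδ
  obtain ⟨v, hv, hcv⟩ := Metric.totallyBounded_iff.mp hB δ hδ
  refine ⟨(fun p : X × X => c • (p.1 - p.2)) '' (u ×ˢ v), (hu.prod hv).image _, ?_⟩
  rintro x ⟨a, ha, b, hb, rfl⟩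
  obtain ⟨a', ha'u, haa'⟩ := Set.mem_iUnion₂.mp (hcu ha)
  obtain ⟨b', hb'v, hbb'⟩ := Set.mem_iUnion₂.mp (hcv hb)
  rw [Metric.mem_ball] at haa' hbb'
  refine Set.mem_iUnion₂.mpr ⟨c • (a' - b'), Set.mem_image_of_mem _ (Set.mk_mem_prod ha'u hb'v),
    Metric.mem_ball.mpr ?_⟩
  have h1 : dist (c • (a - b)) (c • (a' - b')) = |c| * ‖(a - a') - (b - b')‖ := by
    rw [dist_eq_norm, ← smul_sub, norm_smul, Real.norm_eq_abs]
    congr 2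
    abel
  have h2 : ‖(a - a') - (b - b')‖ ≤ ‖a - a'‖ + ‖b - b'‖ := norm_sub_le _ _
  have h3 : ‖a - a'‖ < δ := by rwa [← dist_eq_norm]
  have h4 : ‖b - b'‖ < δ := by rwa [← dist_eq_norm]
  have hcabs : (0:ℝ) ≤ |c| := abs_nonneg c
  have h5 : |c| * ‖(a - a') - (b - b')‖ ≤ |c| * (2 * δ) := by nlinarith
  have h6 : |c| * (2 * δ) < ε := by
    have hpos : (0:ℝ) < |c| + 1 := by positivity
    rw [hδdef]
    have he : |c| * (2 * (ε / (2 * (|c| + 1)))) = ε * |c| / (|c| + 1) := by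
      field_simp
    rw [he, div_lt_iff₀ hpos]
    nlinarith
  rw [h1]
  exact lt_of_le_of_lt h5 h6

/-- For a family `(Φ t)_{t ≥ 0}` of measure-preserving bijections of
`𝕋^d`: if some single bounded measurable `ρ₀` has non-precompact trajectory
`{ρ₀ ∘ Φ_t⁻¹}_{t ≥ 0}` in `L²(𝕋^d)`, then the set `ℱ ⊆ L^∞(𝕋^d)` of data with
non-precompact trajectory is open and dense in `L^∞(𝕋^d)`. -/
theorem stmt10 (d : ℕ) (hd : 2 ≤ d)
    (Φ : ℝ → (Torus d ≃ᵐ Torus d))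
    (hΦ : ∀ t : ℝ, 0 ≤ t → MeasurePreserving (Φ t) (volume : Measure (Torus d)) volume)
    (ρ₀ : Torus d → ℝ) (hρ₀m : Measurable ρ₀) (C : ℝ) (hρ₀b : ∀ x, |ρ₀ x| ≤ C)
    (hρ₀ : ¬ IsCompact (closure (trajectory Φ ρ₀))) :
    IsOpen (mixedData Φ) ∧ Dense (mixedData Φ) := by
  have hmp : ∀ t : ℝ, 0 ≤ t →
      MeasurePreserving (⇑(Φ t).symm) (volume : Measure (Torus d)) volume :=
    fun t ht => MeasurePreserving.symm (Φ t) (hΦ t ht)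
  have comp2 : ∀ (τ : Torus d → ℝ), MemLp τ ⊤ (volume : Measure (Torus d)) →
      ∀ t : ℝ, 0 ≤ t → MemLp (τ ∘ ⇑(Φ t).symm) 2 (volume : Measure (Torus d)) :=
    fun τ hτ t ht => (hτ.comp_measurePreserving (hmp t ht)).mono_exponent le_top
  -- the key distance estimate between trajectories
  have near : ∀ (ρ σ : Lp ℝ ⊤ (volume : Measure (Torus d))),
      ∀ g ∈ trajectory Φ (ρ : Torus d → ℝ), ∃ g' ∈ trajectory Φ (σ : Torus d → ℝ),
        dist g g' ≤ dist ρ σ := by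
    rintro ρ σ g ⟨t, ht, hg⟩
    set g' := ((comp2 _ (Lp.memLp σ) t ht)).toLp _ with hg'def
    refine ⟨g', ⟨t, ht, MemLp.coeFn_toLp _⟩, ?_⟩
    rw [dist_eq_norm, dist_eq_norm, Lp.norm_def, Lp.norm_def]
    have e1 : eLpNorm (↑↑(g - g')) 2 (volume : Measure (Torus d))
        = eLpNorm (((ρ : Torus d → ℝ) - (σ : Torus d → ℝ)) ∘ ⇑(Φ t).symm) 2 volume := by
      apply eLpNorm_congr_ae
      filter_upwards [Lp.coeFn_sub g g', hg, MemLp.coeFn_toLp (comp2 _ (Lp.memLp σ) t ht)]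
        with x hx h1 h2
      simp only [hx, Pi.sub_apply, Function.comp_apply]
      rw [h1, h2]
      simp [Function.comp_apply]
    have hm : AEStronglyMeasurable ((ρ : Torus d → ℝ) - (σ : Torus d → ℝ))
        (volume : Measure (Torus d)) := (Lp.memLp ρ).1.sub (Lp.memLp σ).1
    have e2 : eLpNorm (((ρ : Torus d → ℝ) - (σ : Torus d → ℝ)) ∘ ⇑(Φ t).symm) 2
          (volume : Measure (Torus d)) ≤ eLpNorm (↑↑(ρ - σ)) ⊤ (volume : Measure (Torus d)) := by
      calc eLpNorm (((ρ : Torus d → ℝ) - (σ : Torus d → ℝ)) ∘ ⇑(Φ t).symm) 2 volume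
          ≤ eLpNorm (((ρ : Torus d → ℝ) - (σ : Torus d → ℝ)) ∘ ⇑(Φ t).symm) ⊤ volume :=
            eLpNorm_le_eLpNorm_of_exponent_le le_top (hm.comp_measurePreserving (hmp t ht))
        _ = eLpNorm ((ρ : Torus d → ℝ) - (σ : Torus d → ℝ)) ⊤ volume :=
            eLpNorm_comp_measurePreserving hm (hmp t ht)
        _ = eLpNorm (↑↑(ρ - σ)) ⊤ volume := (eLpNorm_congr_ae (Lp.coeFn_sub ρ σ)).symm
    rw [e1]
    exact ENNReal.toReal_mono (Lp.eLpNorm_ne_top _) e2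
  constructor
  · -- open
    rw [← isClosed_compl_iff]
    apply isClosed_of_closure_subset
    intro ρ hρ
    simp only [mixedData, Set.mem_compl_iff, Set.mem_setOf_eq, not_not]
    have htb : TotallyBounded (trajectory Φ (ρ : Torus d → ℝ)) := by
      apply totallyBounded_of_near
      intro ε hε
      obtain ⟨σ, hσ, hdist⟩ := Metric.mem_closure_iff.mp hρ ε hε
      simp only [mixedData, Set.mem_compl_iff, Set.mem_setOf_eq, not_not] at hσ
      refine ⟨trajectory Φ (σ : Torus d → ℝ), hσ.totallyBounded.subset subset_closure,
        fun g hg => ?_⟩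
      obtain ⟨g', hg', hgg'⟩ := near ρ σ g hg
      exact ⟨g', hg', hgg'.trans hdist.le⟩
    exact TotallyBounded.isCompact_of_isClosed htb.closure isClosed_closure
  · -- dense
    have hρ₀mem : MemLp ρ₀ ⊤ (volume : Measure (Torus d)) :=
      memLp_top_of_bound hρ₀m.aestronglyMeasurable C
        (Eventually.of_forall fun x => by simpa using hρ₀b x)
    set P : Lp ℝ ⊤ (volume : Measure (Torus d)) := hρ₀mem.toLp ρ₀ with hPdef
    rw [Metric.dense_iff]
    intro ρ r hr
    by_cases hρ : ρ ∈ mixedData Φ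
    · exact ⟨ρ, Metric.mem_ball_self hr, hρ⟩
    have hρc : IsCompact (closure (trajectory Φ (ρ : Torus d → ℝ))) := not_not.mp hρ
    set c : ℝ := r / (2 * (‖P‖ + 1)) with hcdef
    have hc : 0 < c := by positivity
    refine ⟨ρ + c • P, ?_, ?_⟩
    · rw [Metric.mem_ball, dist_eq_norm]
      have hPnn : (0:ℝ) ≤ ‖P‖ := norm_nonneg P
      have he : ρ + c • P - ρ = c • P := by abel
      rw [he, norm_smul, Real.norm_eq_abs, abs_of_pos hc, hcdef]
      rw [div_mul_eq_mul_div]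
      rw [div_lt_iff₀ (by positivity : (0:ℝ) < 2 * (‖P‖ + 1))]
      nlinarith
    · -- ρ + c • P ∈ mixedData Φ
      simp only [mixedData, Set.mem_setOf_eq]
      intro hcomp
      apply hρ₀
      have hA : TotallyBounded (trajectory Φ ((ρ + c • P : Lp ℝ ⊤ (volume : Measure (Torus d))) :
          Torus d → ℝ)) := hcomp.totallyBounded.subset subset_closure
      have hB : TotallyBounded (trajectory Φ (ρ : Torus d → ℝ)) :=
        hρc.totallyBounded.subset subset_closure
      have hσfun : ((ρ + c • P : Lp ℝ ⊤ (volume : Measure (Torus d))) : Torus d → ℝ)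
          =ᵐ[volume] fun x => (ρ : Torus d → ℝ) x + c * ρ₀ x := by
        filter_upwards [Lp.coeFn_add ρ (c • P), Lp.coeFn_smul c P, hρ₀mem.coeFn_toLp]
          with x h1 h2 h3
        simp only [h1, Pi.add_apply, h2, Pi.smul_apply, smul_eq_mul]
        rw [h3]
      have hsub : trajectory Φ ρ₀ ⊆
          {x | ∃ a ∈ trajectory Φ ((ρ + c • P : Lp ℝ ⊤ (volume : Measure (Torus d))) :
                Torus d → ℝ),
              ∃ b ∈ trajectory Φ (ρ : Torus d → ℝ), x = c⁻¹ • (a - b)} := by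
        rintro g ⟨t, ht, hg⟩
        refine ⟨(comp2 _ (Lp.memLp (ρ + c • P)) t ht).toLp _, ⟨t, ht, MemLp.coeFn_toLp _⟩,
          (comp2 _ (Lp.memLp ρ) t ht).toLp _, ⟨t, ht, MemLp.coeFn_toLp _⟩, ?_⟩
        apply Lp.ext
        have hcomp_ae : (((ρ + c • P : Lp ℝ ⊤ (volume : Measure (Torus d))) : Torus d → ℝ)
              ∘ ⇑(Φ t).symm)
            =ᵐ[volume] (fun x => (ρ : Torus d → ℝ) x + c * ρ₀ x) ∘ ⇑(Φ t).symm :=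
          (hmp t ht).quasiMeasurePreserving.ae_eq_comp hσfun
        filter_upwards [hg,
          Lp.coeFn_smul c⁻¹ ((comp2 _ (Lp.memLp (ρ + c • P)) t ht).toLp _
            - (comp2 _ (Lp.memLp ρ) t ht).toLp _),
          Lp.coeFn_sub ((comp2 _ (Lp.memLp (ρ + c • P)) t ht).toLp _)
            ((comp2 _ (Lp.memLp ρ) t ht).toLp _),
          MemLp.coeFn_toLp (comp2 _ (Lp.memLp (ρ + c • P)) t ht),
          MemLp.coeFn_toLp (comp2 _ (Lp.memLp ρ) t ht), hcomp_ae]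
          with x h1 h2 h3 h4 h5 h6
        rw [h1, h2]
        simp only [Pi.smul_apply, h3, Pi.sub_apply, smul_eq_mul]
        rw [h4, h5]
        simp only [Function.comp_apply] at h6 ⊢
        rw [h6]
        field_simp
        ring
      exact TotallyBounded.isCompact_of_isClosed
        (((tb_comb c⁻¹ hA hB).subset hsub).closure) isClosed_closure
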